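/- Interval observer soundness for discrete-time LTI systems: Let F ∈ ℝ^{n×n}, H ∈ ℝ^{p×n}, D ∈ ℝ^{n×q}, W ∈ ℝ^{p×r}, and let A ∈ ℝ^{n×n} be entrywise nonnegative, B ∈ ℝ^{n×p}, and T ∈ ℝ^{n×n} an invertible solution of T F = A T + B H. Suppose x_{k+1} = F x_k + u_k + D d_k, y_k = H x_k + W w_k, with known componentwise bounds d̲_k ≤ d_k ≤ d̄_k, w̲_k ≤ w_k ≤ w̄_k and x̲_0 ≤ x_0 ≤ x̄_0. Define z̄_0 = T⊕ x̄_0 − T⊖ x̲_0, z̲_0 = T⊕ x̲_0 − T⊖ x̄_0, and for k ≥ 0: z̄_{k+1} = A z̄_k + B y_k + T u_k + (TD)⊕ d̄_k − (TD)⊖ d̲_k + (BW)⊖ w̄_k − (BW)⊕ w̲_k, and z̲_{k+1} = A z̲_k + B y_k + T u_k + (TD)⊕ d̲_k − (TD)⊖ d̄_k + (BW)⊖ w̲_k − (BW)⊕ w̄_k. Then z̲_k ≤ T x_k ≤ z̄_k for all k ∈ ℕ. -/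

import Mathlib

def matPos {m n : ℕ} (A : Matrix (Fin m) (Fin n) ℝ) : Matrix (Fin m) (Fin n) ℝ :=
  fun i j => max 0 (A i j)

def matNeg {m n : ℕ} (A : Matrix (Fin m) (Fin n) ℝ) : Matrix (Fin m) (Fin n) ℝ :=
  matPos A - A

/-! The observer works in the coordinates `z = T x`: by the Sylvester equation `T F = A T + B H`,
`T x` evolves as `A (T x) + B y + T u + (T D) d - (B W) w`, driven by the measured output `y`.
Since `A` is nonnegative it propagates enclosures of `T x`, and splitting the gains `T D` and
`B W` as `M = M⊕ - M⊖` with both parts nonnegative encloses the disturbance terms. -/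

open scoped Matrix

theorem Matrix.monotone_mulVec {m n R : Type*} [Fintype n] [Semiring R] [PartialOrder R]
    [IsOrderedRing R] {M : Matrix m n R} (hM : ∀ i j, 0 ≤ M i j) : Monotone (M *ᵥ ·) :=
  fun _ _ h i => dotProduct_le_dotProduct_of_nonneg_left h (hM i)

section IntervalEnclosure

variable {m n : ℕ} (M : Matrix (Fin m) (Fin n) ℝ)

theorem matPos_nonneg (i : Fin m) (j : Fin n) : 0 ≤ matPos M i j :=
  le_max_left _ _

theorem matNeg_nonneg (i : Fin m) (j : Fin n) : 0 ≤ matNeg M i j :=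
  sub_nonneg.mpr (le_max_right _ _)

theorem matPos_sub_matNeg : matPos M - matNeg M = M :=
  sub_sub_cancel _ _

theorem mulVec_mem_Icc_matPos_matNeg {a b s : Fin n → ℝ} (hs : s ∈ Set.Icc a b) :
    M *ᵥ s ∈ Set.Icc (matPos M *ᵥ a - matNeg M *ᵥ b) (matPos M *ᵥ b - matNeg M *ᵥ a) := by
  have hsplit : M *ᵥ s = matPos M *ᵥ s - matNeg M *ᵥ s := by
    rw [← Matrix.sub_mulVec, matPos_sub_matNeg]
  have hpos := Matrix.monotone_mulVec (matPos_nonneg M)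
  have hneg := Matrix.monotone_mulVec (matNeg_nonneg M)
  rw [hsplit]
  exact ⟨sub_le_sub (hpos hs.1) (hneg hs.2), sub_le_sub (hpos hs.2) (hneg hs.1)⟩

end IntervalEnclosure

theorem mulVec_step_of_sylvester {n p q r R : Type*} [Fintype n] [Fintype p] [Fintype q]
    [Fintype r] [Ring R] {F A T : Matrix n n R} {H : Matrix p n R} {D : Matrix n q R}
    {W : Matrix p r R} {B : Matrix n p R} (hSyl : T * F = A * T + B * H)
    (x u : n → R) (d : q → R) (w : r → R) :
    T *ᵥ (F *ᵥ x + u + D *ᵥ d) =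
      A *ᵥ (T *ᵥ x) + B *ᵥ (H *ᵥ x + W *ᵥ w) + T *ᵥ u + (T * D) *ᵥ d - (B * W) *ᵥ w := by
  simp only [Matrix.mulVec_add, Matrix.mulVec_mulVec, hSyl, Matrix.add_mulVec]
  abel

theorem interval_observer_soundness_z_general {n p q r : ℕ}
    (F A T : Matrix (Fin n) (Fin n) ℝ) (H : Matrix (Fin p) (Fin n) ℝ)
    (D : Matrix (Fin n) (Fin q) ℝ) (W : Matrix (Fin p) (Fin r) ℝ)
    (B : Matrix (Fin n) (Fin p) ℝ)
    (hA : ∀ i j, 0 ≤ A i j)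
    (hSyl : T * F = A * T + B * H)
    (x u : ℕ → Fin n → ℝ) (y : ℕ → Fin p → ℝ)
    (d dbar dlow : ℕ → Fin q → ℝ) (w wbar wlow : ℕ → Fin r → ℝ)
    (zbar zlow : ℕ → Fin n → ℝ) (xbar0 xlow0 : Fin n → ℝ)
    (hx : ∀ k, x (k + 1) = F.mulVec (x k) + u k + D.mulVec (d k))
    (hy : ∀ k, y k = H.mulVec (x k) + W.mulVec (w k))
    (hd : ∀ k, dlow k ≤ d k ∧ d k ≤ dbar k)
    (hw : ∀ k, wlow k ≤ w k ∧ w k ≤ wbar k)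
    (hx0 : xlow0 ≤ x 0 ∧ x 0 ≤ xbar0)
    (hz0 : zbar 0 = (matPos T).mulVec xbar0 - (matNeg T).mulVec xlow0 ∧
           zlow 0 = (matPos T).mulVec xlow0 - (matNeg T).mulVec xbar0)
    (hzbar : ∀ k, zbar (k + 1) = A.mulVec (zbar k) + B.mulVec (y k) + T.mulVec (u k)
      + (matPos (T * D)).mulVec (dbar k) - (matNeg (T * D)).mulVec (dlow k)
      + (matNeg (B * W)).mulVec (wbar k) - (matPos (B * W)).mulVec (wlow k))
    (hzlow : ∀ k, zlow (k + 1) = A.mulVec (zlow k) + B.mulVec (y k) + T.mulVec (u k)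
      + (matPos (T * D)).mulVec (dlow k) - (matNeg (T * D)).mulVec (dbar k)
      + (matNeg (B * W)).mulVec (wlow k) - (matPos (B * W)).mulVec (wbar k)) :
    ∀ k, zlow k ≤ T.mulVec (x k) ∧ T.mulVec (x k) ≤ zbar k := by
  intro k
  induction k with
  | zero =>
    rw [hz0.1, hz0.2]
    exact mulVec_mem_Icc_matPos_matNeg T hx0
  | succ k ih =>
    obtain ⟨hdlow, hdbar⟩ := mulVec_mem_Icc_matPos_matNeg (T * D) (hd k)
    obtain ⟨hwlow, hwbar⟩ := mulVec_mem_Icc_matPos_matNeg (B * W) (hw k)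
    have hAlow := Matrix.monotone_mulVec hA ih.1
    have hAbar := Matrix.monotone_mulVec hA ih.2
    rw [hx k, mulVec_step_of_sylvester hSyl _ _ (d k) (w k), ← hy k, hzlow, hzbar]
    constructor
    · calc _ = A *ᵥ zlow k + (B *ᵥ y k + T *ᵥ u k)
              + (matPos (T * D) *ᵥ dlow k - matNeg (T * D) *ᵥ dbar k)
              - (matPos (B * W) *ᵥ wbar k - matNeg (B * W) *ᵥ wlow k) := by abel
        _ ≤ A *ᵥ (T *ᵥ x k) + (B *ᵥ y k + T *ᵥ u k) + (T * D) *ᵥ d k - (B * W) *ᵥ w k := by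
          gcongr
        _ = _ := by abel
    · calc _ = A *ᵥ (T *ᵥ x k) + (B *ᵥ y k + T *ᵥ u k) + (T * D) *ᵥ d k - (B * W) *ᵥ w k := by
            abel
        _ ≤ A *ᵥ zbar k + (B *ᵥ y k + T *ᵥ u k)
              + (matPos (T * D) *ᵥ dbar k - matNeg (T * D) *ᵥ dlow k)
              - (matPos (B * W) *ᵥ wlow k - matNeg (B * W) *ᵥ wbar k) := by gcongr
        _ = _ := by abel

theorem interval_observer_soundness_z {n p q r : ℕ}
    (F A T : Matrix (Fin n) (Fin n) ℝ) (H : Matrix (Fin p) (Fin n) ℝ)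
    (D : Matrix (Fin n) (Fin q) ℝ) (W : Matrix (Fin p) (Fin r) ℝ)
    (B : Matrix (Fin n) (Fin p) ℝ)
    (hA : ∀ i j, 0 ≤ A i j) (hTinv : IsUnit T.det)
    (hSyl : T * F = A * T + B * H)
    (x u : ℕ → Fin n → ℝ) (y : ℕ → Fin p → ℝ)
    (d dbar dlow : ℕ → Fin q → ℝ) (w wbar wlow : ℕ → Fin r → ℝ)
    (zbar zlow : ℕ → Fin n → ℝ) (xbar0 xlow0 : Fin n → ℝ)
    (hx : ∀ k, x (k + 1) = F.mulVec (x k) + u k + D.mulVec (d k))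
    (hy : ∀ k, y k = H.mulVec (x k) + W.mulVec (w k))
    (hd : ∀ k, dlow k ≤ d k ∧ d k ≤ dbar k)
    (hw : ∀ k, wlow k ≤ w k ∧ w k ≤ wbar k)
    (hx0 : xlow0 ≤ x 0 ∧ x 0 ≤ xbar0)
    (hz0 : zbar 0 = (matPos T).mulVec xbar0 - (matNeg T).mulVec xlow0 ∧
           zlow 0 = (matPos T).mulVec xlow0 - (matNeg T).mulVec xbar0)
    (hzbar : ∀ k, zbar (k + 1) = A.mulVec (zbar k) + B.mulVec (y k) + T.mulVec (u k)
      + (matPos (T * D)).mulVec (dbar k) - (matNeg (T * D)).mulVec (dlow k)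
      + (matNeg (B * W)).mulVec (wbar k) - (matPos (B * W)).mulVec (wlow k))
    (hzlow : ∀ k, zlow (k + 1) = A.mulVec (zlow k) + B.mulVec (y k) + T.mulVec (u k)
      + (matPos (T * D)).mulVec (dlow k) - (matNeg (T * D)).mulVec (dbar k)
      + (matNeg (B * W)).mulVec (wlow k) - (matPos (B * W)).mulVec (wbar k)) :
    ∀ k, zlow k ≤ T.mulVec (x k) ∧ T.mulVec (x k) ≤ zbar k :=
  interval_observer_soundness_z_general F A T H D W B hA hSyl x u y d dbar dlow w wbar wlow zbar
    zlow xbar0 xlow0 hx hy hd hw hx0 hz0 hzbar hzlow
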